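/- arXiv:2201.00183 — 2 statements merged into one kernel-verified Lean document; each statement's English description precedes it below -/
import Mathlib

section
/- The point evaluation map [z] ↦ (f ↦ f(z)) is a well-defined injection from the quotient of the closed polydisc by the permutation action of S_d into the set of characters (maximal ideal space) of the symmetric polydisc algebra A_sym(D^d). -/
def closedPolydisc (d : ℕ) : Set (Fin d → ℂ) := {z | ∀ i, ‖z i‖ ≤ 1}

/-- The equivalence relation on the closed polydisc: `z ∼ w` iff `w = σz` for a
permutation `σ` of the coordinates. -/
def permSetoid (d : ℕ) : Setoid ↥(closedPolydisc d) where
  r z w := ∃ σ : Equiv.Perm (Fin d), (z : Fin d → ℂ) ∘ σ = (w : Fin d → ℂ)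
  iseqv := by
    constructor
    · exact fun z => ⟨Equiv.refl _, rfl⟩
    · rintro z w ⟨σ, h⟩
      refine ⟨σ.symm, ?_⟩
      funext i
      have := congrFun h (σ.symm i)
      simpa using this.symm
    · rintro x y z ⟨σ, h⟩ ⟨τ, h'⟩
      refine ⟨τ.trans σ, ?_⟩
      funext i
      have h1 := congrFun h (τ i)
      have h2 := congrFun h' i
      simpa [Equiv.trans] using h1.trans h2

def polydisc (d : ℕ) : Set (Fin d → ℂ) := {z | ∀ i, ‖z i‖ < 1}

/-- An element of the symmetric polydisc algebra `A_sym(𝔻^d)`: continuous on the closed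
polydisc, holomorphic on the open polydisc, and invariant under coordinate permutations. -/
def SymElt (d : ℕ) : Type :=
  {f : (Fin d → ℂ) → ℂ // ContinuousOn f (closedPolydisc d) ∧
    DifferentiableOn ℂ f (polydisc d) ∧
    ∀ σ : Equiv.Perm (Fin d), ∀ z ∈ closedPolydisc d, f (z ∘ σ) = f z}

/-! ### Auxiliary lemmas -/

lemma map_univ_perm {α : Type*} {d : ℕ} (z : Fin d → α) (σ : Equiv.Perm (Fin d)) :
    Multiset.map (z ∘ σ) Finset.univ.val = Multiset.map z Finset.univ.val := by
  rw [← Multiset.map_map, Multiset.map_univ_val_equiv]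

lemma map_univ_val_succ {α : Type*} {d : ℕ} (f : Fin (d + 1) → α) :
    Multiset.map f Finset.univ.val
      = f 0 ::ₘ Multiset.map (fun j : Fin d => f j.succ) Finset.univ.val := by
  have h := congrArg Finset.val (Fin.univ_succ d)
  rw [Finset.cons_val, Finset.map_val] at h
  rw [h, Multiset.map_cons, Multiset.map_map]
  rfl

lemma exists_perm_of_map_univ_eq {α : Type*} :
    ∀ {d : ℕ} (z w : Fin d → α),
      Multiset.map z Finset.univ.val = Multiset.map w Finset.univ.val →
      ∃ σ : Equiv.Perm (Fin d), z ∘ σ = w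
  | 0, z, w, _ => ⟨Equiv.refl _, funext fun i => i.elim0⟩
  | (d + 1), z, w, h => by
    have hw0 : w 0 ∈ Multiset.map z Finset.univ.val := by
      rw [h]
      exact Multiset.mem_map_of_mem _ (Finset.mem_univ_val _)
    obtain ⟨i, -, hi⟩ := Multiset.mem_map.1 hw0
    have hz' : Multiset.map (z ∘ Equiv.swap 0 i) Finset.univ.val
        = Multiset.map w Finset.univ.val := by rw [map_univ_perm, h]
    rw [map_univ_val_succ (z ∘ Equiv.swap 0 i), map_univ_val_succ w] at hz'
    have h0 : (z ∘ Equiv.swap 0 i) 0 = w 0 := by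
      simp only [Function.comp_apply, Equiv.swap_apply_left]
      exact hi
    rw [h0, Multiset.cons_inj_right] at hz'
    obtain ⟨σ', hσ'⟩ := exists_perm_of_map_univ_eq _ _ hz'
    refine ⟨Equiv.Perm.decomposeFin.symm (i, σ'), ?_⟩
    funext x
    induction x using Fin.cases with
    | zero => simpa using hi
    | succ j =>
      have := congrFun hσ' j
      simpa using this

/-- The `k`-th elementary symmetric function as an element of `A_sym(𝔻^d)`. -/
noncomputable def eSymFun (d k : ℕ) : (Fin d → ℂ) → ℂ :=
  fun x => ∑ s ∈ Finset.powersetCard k Finset.univ, ∏ i ∈ s, x i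

lemma eSymFun_eq (d k : ℕ) (x : Fin d → ℂ) :
    eSymFun d k x = (Multiset.map x Finset.univ.val).esymm k :=
  (Finset.esymm_map_val x Finset.univ k).symm

lemma differentiable_prod_coords {d : ℕ} (s : Finset (Fin d)) :
    Differentiable ℂ (fun x : Fin d → ℂ => ∏ i ∈ s, x i) := by
  classical
  induction s using Finset.induction with
  | empty => simpa using differentiable_const (1 : ℂ)
  | insert _ _ hnotmem ih =>
    simp only [Finset.prod_insert hnotmem]
    exact ((ContinuousLinearMap.proj (R := ℂ) (φ := fun _ : Fin d => ℂ) _).differentiable).mul ih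

noncomputable def eSymElt (d k : ℕ) : SymElt d :=
  ⟨eSymFun d k, by
    refine ⟨?_, ?_, ?_⟩
    · exact (continuous_finset_sum _ fun s _ =>
        continuous_finset_prod _ fun i _ => continuous_apply i).continuousOn
    · exact (Differentiable.fun_sum fun s _ => differentiable_prod_coords s).differentiableOn
    · intro σ x _
      rw [eSymFun_eq, eSymFun_eq, map_univ_perm]⟩

lemma eSymElt_apply (d k : ℕ) (x : Fin d → ℂ) :
    (eSymElt d k).1 x = (Multiset.map x Finset.univ.val).esymm k :=
  eSymFun_eq d k x

/-- Point evaluation gives a well-defined injection of the quotient of the closed polydisc by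
the permutation action into the characters of `A_sym(𝔻^d)`: there is an injective map `Φ` on
the quotient with `Φ [z] f = f(z)`, and each `Φ q` is multiplicative, additive and unital. -/
theorem eval_welldefined_injective_character (d : ℕ) (hd : 1 ≤ d) :
    ∃ Φ : Quotient (permSetoid d) → (SymElt d → ℂ),
      (∀ z : ↥(closedPolydisc d), ∀ f : SymElt d,
        Φ (Quotient.mk (permSetoid d) z) f = f.1 z.1) ∧
      Function.Injective Φ ∧
      (∀ q, ∀ f g fg : SymElt d,
        (∀ x ∈ closedPolydisc d, fg.1 x = f.1 x * g.1 x) → Φ q fg = Φ q f * Φ q g) ∧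
      (∀ q, ∀ f g fg : SymElt d,
        (∀ x ∈ closedPolydisc d, fg.1 x = f.1 x + g.1 x) → Φ q fg = Φ q f + Φ q g) ∧
      (∀ q, ∀ one : SymElt d, (∀ x ∈ closedPolydisc d, one.1 x = 1) → Φ q one = 1) := by
  classical
  have key : ∀ z w : ↥(closedPolydisc d), (permSetoid d).r z w →
      (fun f : SymElt d => f.1 z.1) = fun f : SymElt d => f.1 w.1 := by
    rintro z w ⟨σ, hσ⟩
    funext f
    have hf := f.2.2.2 σ z.1 z.2
    rw [hσ] at hf
    exact hf.symm
  refine ⟨Quotient.lift (fun z (f : SymElt d) => f.1 z.1) key, fun z f => rfl, ?_, ?_, ?_, ?_⟩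
  · intro q1 q2 h
    refine Quotient.inductionOn₂ q1 q2 (fun z w h => ?_) h
    set Mz := Multiset.map z.1 Finset.univ.val with hMz
    set Mw := Multiset.map w.1 Finset.univ.val with hMw
    have hcardz : Multiset.card Mz = d := by simp [hMz]
    have hcardw : Multiset.card Mw = d := by simp [hMw]
    have hesymm : ∀ k, Mz.esymm k = Mw.esymm k := by
      intro k
      have h' : (fun f : SymElt d => f.1 z.1) = fun f : SymElt d => f.1 w.1 := h
      have hk : (eSymElt d k).1 z.1 = (eSymElt d k).1 w.1 := congrFun h' _
      rwa [eSymElt_apply, eSymElt_apply] at hk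
    have hpoly : (Mz.map fun a => Polynomial.X - Polynomial.C a).prod
        = (Mw.map fun a => Polynomial.X - Polynomial.C a).prod := by
      refine Polynomial.ext fun k => ?_
      by_cases hk : k ≤ d
      · rw [Multiset.prod_X_sub_C_coeff _ (by rw [hcardz]; exact hk),
          Multiset.prod_X_sub_C_coeff _ (by rw [hcardw]; exact hk), hcardz, hcardw, hesymm]
      · rw [Polynomial.coeff_eq_zero_of_natDegree_lt, Polynomial.coeff_eq_zero_of_natDegree_lt]
        · rw [Polynomial.natDegree_multiset_prod_X_sub_C_eq_card, hcardw]; omega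
        · rw [Polynomial.natDegree_multiset_prod_X_sub_C_eq_card, hcardz]; omega
    have hroots := congrArg Polynomial.roots hpoly
    rw [Polynomial.roots_multiset_prod_X_sub_C, Polynomial.roots_multiset_prod_X_sub_C] at hroots
    obtain ⟨σ, hσ⟩ := exists_perm_of_map_univ_eq z.1 w.1 hroots
    exact Quotient.sound ⟨σ, hσ⟩
  · intro q f g fg hfg
    exact Quotient.inductionOn q fun z => hfg z.1 z.2
  · intro q f g fg hfg
    exact Quotient.inductionOn q fun z => hfg z.1 z.2
  · intro q one hone
    exact Quotient.inductionOn q fun z => hone z.1 z.2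
end

section
/- Let R_d be a commutative unital ring of complex-valued functions on D^d, R_1 a commutative unital ring of functions on D, and D : R_d → R_1, U : R_1 → R_d ring homomorphisms with D∘U = id on R_1. If I and J are finitely generated ideals of R_1, I_d and J_d are the ideals of R_d generated by the U-images of generators of I and J respectively, and I_d ∩ J_d is generated by p_1,...,p_M, then I ∩ J is generated by Dp_1,...,Dp_M; in particular I ∩ J is finitely generated. -/
/-! Since `D ∘ U = id`, pushing `I ∩ J` forward along `U` and back along `D` recovers it:
`I ∩ J = D (U I ∩ U J)`. The ideals generated by `U f` and `U g` are the extensions `U I`,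
`U J`, so `D` maps the generators `p` of their intersection onto generators of `I ∩ J`. -/

namespace Ideal

variable {R S : Type*} [CommRing R] [CommRing S]

theorem map_span_range {ι : Type*} (φ : R →+* S) (v : ι → R) :
    map φ (span (Set.range v)) = span (Set.range (φ ∘ v)) := by
  rw [map_span, Set.range_comp]

theorem map_map_of_leftInverse {D : S →+* R} {U : R →+* S} (hDU : Function.LeftInverse D U)
    (I : Ideal R) : map D (map U I) = I := by
  rw [map_map, show D.comp U = RingHom.id R from RingHom.ext hDU, map_id]

theorem map_inf_map_of_leftInverse {D : S →+* R} {U : R →+* S}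
    (hDU : Function.LeftInverse D U) (I J : Ideal R) :
    map D (map U I ⊓ map U J) = I ⊓ J := by
  refine le_antisymm ?_ fun x hx => ?_
  · calc map D (map U I ⊓ map U J) ≤ map D (map U I) ⊓ map D (map U J) :=
          le_inf (map_mono inf_le_left) (map_mono inf_le_right)
      _ = I ⊓ J := by rw [map_map_of_leftInverse hDU, map_map_of_leftInverse hDU]
  · rw [← hDU x]
    exact mem_map_of_mem D ⟨mem_map_of_mem U hx.1, mem_map_of_mem U hx.2⟩

end Ideal

/-- Transfer of finite generation of intersections of finitely generated ideals along a ring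
retraction `D ∘ U = id`: if `I = ⟨f⟩`, `J = ⟨g⟩` in `R₁`, and the intersection of the ideals
generated by `U f`, `U g` in `R_d` is generated by `p₁, …, p_M`, then `I ∩ J` is generated by
`D p₁, …, D p_M`; in particular `I ∩ J` is finitely generated. -/
theorem inter_fg_of_retraction {Rd R1 : Type*} [CommRing Rd] [CommRing R1]
    (D : Rd →+* R1) (U : R1 →+* Rd) (hDU : ∀ g : R1, D (U g) = g)
    {K L M : ℕ} (f : Fin K → R1) (g : Fin L → R1) (p : Fin M → Rd)
    (hp : Ideal.span (Set.range (U ∘ f)) ⊓ Ideal.span (Set.range (U ∘ g)) =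
      Ideal.span (Set.range p)) :
    Ideal.span (Set.range f) ⊓ Ideal.span (Set.range g) =
      Ideal.span (Set.range (D ∘ p)) ∧
    (Ideal.span (Set.range f) ⊓ Ideal.span (Set.range g)).FG := by
  have hinter : Ideal.span (Set.range f) ⊓ Ideal.span (Set.range g) =
      Ideal.span (Set.range (D ∘ p)) := by
    rw [← Ideal.map_span_range, ← hp, ← Ideal.map_span_range U f, ← Ideal.map_span_range U g,
      Ideal.map_inf_map_of_leftInverse hDU]
  exact ⟨hinter, hinter ▸ Submodule.fg_span (Set.finite_range _)⟩
end
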